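/- arXiv:1709.05510 — 2 statements merged into one kernel-verified Lean document; each statement's English description precedes it below -/
import Mathlib

section
/- Let x_u, x_v ∈ [0,1], let x = d_L(x_u, x_v), and let r ∈ [0, 1/2]. If x + 2r ≤ 1, then the Lebesgue measure of the set {z ∈ [0,1] : d_L(z, x_u) ≤ r or d_L(z, x_v) ≤ r} equals min(2r + x, 4r); in particular it equals 2r + x when x ≤ 2r and equals 4r when x > 2r. -/
open MeasureTheory

/-- The circular distance on `[0,1]`. -/
noncomputable def dL (x y : ℝ) : ℝ := min |x - y| (1 - |x - y|)

/-!
On representatives in `[0,1]`, `dL` is the distance of the circle `ℝ/ℤ`, so the set is the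
preimage in `[0,1]` of the union of two closed arcs of radius `r`, and `[0,1]` is a fundamental
domain of `ℝ → ℝ/ℤ` up to the identified endpoints. Lifting the arcs to real intervals of length
`2r` centred `dL xu xv` apart, the hypothesis `dL xu xv + 2r ≤ 1` makes both fit in one period, on
which the covering map preserves measure. The two intervals either overlap, with union of length
`2r + dL xu xv`, or are disjoint, with total length `4r`.
-/

open Set Metric

theorem Real.volume_closedBall_union_closedBall (a b r : ℝ) :
    volume (closedBall a r ∪ closedBall b r) = ENNReal.ofReal (min (2 * r + |a - b|) (4 * r)) := by
  rcases lt_or_ge r 0 with hr | hr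
  · rw [closedBall_eq_empty.2 hr, closedBall_eq_empty.2 hr, union_self, measure_empty,
      ENNReal.ofReal_of_nonpos (min_le_right _ _ |>.trans (by linarith))]
  wlog hab : a ≤ b generalizing a b
  · rw [union_comm, abs_sub_comm]
    exact this b a (le_of_not_ge hab)
  rw [abs_of_nonpos (sub_nonpos.2 hab), Real.closedBall_eq_Icc, Real.closedBall_eq_Icc]
  rcases le_or_gt (b - a) (2 * r) with hclose | hfar
  · rw [Icc_union_Icc' (by linarith) (by linarith), min_eq_left (by linarith),
      max_eq_right (by linarith), Real.volume_Icc, min_eq_left (by linarith)]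
    ring_nf
  · have hdisj : Disjoint (Icc (a - r) (a + r)) (Icc (b - r) (b + r)) :=
      Set.disjoint_left.2 fun y hya hyb => by linarith [hya.2, hyb.1]
    rw [measure_union hdisj measurableSet_Icc, Real.volume_Icc, Real.volume_Icc,
      ← ENNReal.ofReal_add (by linarith) (by linarith), min_eq_right (by linarith)]
    ring_nf

namespace AddCircle

variable {T : ℝ}

theorem closedBall_coe_eq_image (a r : ℝ) :
    closedBall (a : AddCircle T) r = ((↑) : ℝ → AddCircle T) '' closedBall a r := by
  ext z
  obtain ⟨y, rfl⟩ := QuotientAddGroup.mk_surjective z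
  have hpre := Set.ext_iff.1 (coe_real_preimage_closedBall_eq_iUnion T a r)
  constructor
  · intro hy
    obtain ⟨n, hn⟩ := mem_iUnion.1 ((hpre y).1 hy)
    refine ⟨y - n • T, ?_, ?_⟩
    · rw [mem_closedBall, Real.dist_eq] at hn ⊢
      rwa [sub_sub, add_comm]
    · rw [coe_sub, coe_zsmul, coe_period, smul_zero, sub_zero]
  · rintro ⟨y', hy', hyy'⟩
    rw [← hyy']
    exact (hpre y').2 (mem_iUnion.2 ⟨0, by simpa using hy'⟩)

variable [Fact (0 < T)]

theorem volume_singleton (x : AddCircle T) : volume ({x} : Set (AddCircle T)) = 0 := by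
  rw [← closedBall_zero, volume_closedBall, mul_zero, min_eq_right (Fact.out : 0 < T).le,
    ENNReal.ofReal_zero]

theorem volume_image_coe_of_subset_Ioc {t : ℝ} {K : Set ℝ} (hK : MeasurableSet K)
    (hKt : K ⊆ Ioc t (t + T)) : volume (((↑) : ℝ → AddCircle T) '' K) = volume K := by
  have himage : ((↑) : ℝ → AddCircle T) '' K = equivIoc T t ⁻¹' (Subtype.val ⁻¹' K) := by
    ext z
    constructor
    · rintro ⟨y, hy, rfl⟩
      simpa [mem_preimage, equivIoc_coe_of_mem (hKt hy)] using hy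
    · intro hz
      exact ⟨_, hz, coe_equivIoc⟩
  rw [himage, (measurePreserving_equivIoc T).measure_preimage
      (measurable_subtype_coe hK).nullMeasurableSet,
    (MeasurableEmbedding.subtype_coe measurableSet_Ioc).comap_apply, image_preimage_eq_inter_range,
    Subtype.range_coe, inter_eq_left.2 hKt]

theorem volume_image_coe_of_subset_Icc {t : ℝ} {K : Set ℝ} (hK : MeasurableSet K)
    (hKt : K ⊆ Icc t (t + T)) : volume (((↑) : ℝ → AddCircle T) '' K) = volume K := by
  have hKt' : K \ {t} ⊆ Ioc t (t + T) := fun y hy =>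
    ⟨lt_of_le_of_ne (hKt hy.1).1 (Ne.symm hy.2), (hKt hy.1).2⟩
  have hsplit : ((↑) : ℝ → AddCircle T) '' K ⊆ (↑) '' (K \ {t}) ∪ {(t : AddCircle T)} := by
    rw [← image_singleton, ← image_union, sdiff_union_self]
    exact image_mono subset_union_left
  refine le_antisymm ?_ ?_
  · calc volume (((↑) : ℝ → AddCircle T) '' K)
        ≤ volume (((↑) : ℝ → AddCircle T) '' (K \ {t})) + volume {(t : AddCircle T)} :=
          (measure_mono hsplit).trans (measure_union_le _ _)
      _ = volume K := by
          rw [volume_singleton, add_zero, volume_image_coe_of_subset_Ioc (hK.diff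
            (measurableSet_singleton t)) hKt', measure_sdiff_null (Real.volume_singleton)]
  · calc volume K = volume (K \ {t}) := (measure_sdiff_null Real.volume_singleton).symm
      _ = volume (((↑) : ℝ → AddCircle T) '' (K \ {t})) :=
          (volume_image_coe_of_subset_Ioc (hK.diff (measurableSet_singleton t)) hKt').symm
      _ ≤ volume (((↑) : ℝ → AddCircle T) '' K) := measure_mono (image_mono sdiff_subset)

theorem volume_Icc_inter_preimage_coe (t : ℝ) {A : Set (AddCircle T)} (hA : MeasurableSet A) :
    volume (Icc t (t + T) ∩ (↑) ⁻¹' A) = volume A := by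
  rw [add_projection_respects_measure T t hA, inter_comm]
  exact measure_congr ((Filter.EventuallyEq.refl _ _).inter Ioc_ae_eq_Icc.symm)

theorem volume_closedBall_coe_union_closedBall_coe {a b r : ℝ} (h : |a - b| + 2 * r ≤ T) :
    volume (closedBall (a : AddCircle T) r ∪ closedBall (b : AddCircle T) r)
      = volume (closedBall a r ∪ closedBall b r) := by
  rw [closedBall_coe_eq_image, closedBall_coe_eq_image, ← image_union]
  refine volume_image_coe_of_subset_Icc (t := min a b - r)
    (measurableSet_closedBall.union measurableSet_closedBall) ?_
  rintro y (hy | hy) <;> rw [mem_closedBall, Real.dist_eq, abs_le] at hy <;>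
    rcases le_total a b with hab | hab <;>
    simp only [mem_Icc, min_eq_left, min_eq_right, hab, abs_of_nonpos, abs_of_nonneg,
      sub_nonpos, sub_nonneg] at h ⊢ <;> constructor <;> linarith

theorem volume_closedBall_union_closedBall (x y : AddCircle T) {r : ℝ}
    (h : dist x y + 2 * r ≤ T) :
    volume (closedBall x r ∪ closedBall y r)
      = ENNReal.ofReal (min (2 * r + dist x y) (4 * r)) := by
  obtain ⟨a, rfl⟩ := QuotientAddGroup.mk_surjective x
  set s : ℝ := (equivIoc T (-(T / 2)) (y - a)).1
  have hy : y = ((a + s : ℝ) : AddCircle T) := by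
    rw [coe_add, coe_equivIoc, add_sub_cancel]
  have hdist : dist (a : AddCircle T) y = |a - (a + s)| := by
    have hs : |s| ≤ |T| / 2 := by
      rw [abs_of_pos (Fact.out : 0 < T), abs_le]
      obtain ⟨hs₁, hs₂⟩ := (equivIoc T (-(T / 2)) (y - a)).2
      constructor <;> linarith
    rw [sub_add_cancel_left, abs_neg, ← (norm_coe_eq_abs_iff T (Fact.out : 0 < T).ne').2 hs,
      coe_equivIoc, dist_comm, dist_eq_norm]
  rw [hdist] at h ⊢
  rw [hy, volume_closedBall_coe_union_closedBall_coe h, Real.volume_closedBall_union_closedBall]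

end AddCircle

theorem abs_sub_round_eq_min_abs {t : ℝ} (ht : |t| ≤ 1) :
    |t - round t| = min |t| (1 - |t|) := by
  rw [abs_sub_round_eq_min]
  obtain ⟨ht₁, ht₂⟩ := abs_le.1 ht
  rcases ht₁.eq_or_lt with rfl | ht₁
  · norm_num
  rcases ht₂.eq_or_lt with rfl | ht₂
  · norm_num
  rcases lt_or_ge t 0 with hneg | hnonneg
  · have hfract : Int.fract t = t + 1 :=
      Int.fract_eq_iff.2 ⟨by linarith, by linarith, -1, by push_cast; ring⟩
    rw [hfract, abs_of_neg hneg, min_comm]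
    ring_nf
  · rw [Int.fract_eq_self.2 ⟨hnonneg, ht₂⟩, abs_of_nonneg hnonneg]

theorem dL_eq_dist {x y : ℝ} (h : |x - y| ≤ 1) :
    dL x y = dist (x : UnitAddCircle) (y : UnitAddCircle) := by
  rw [dL, dist_eq_norm, ← AddCircle.coe_sub, UnitAddCircle.norm_eq, abs_sub_round_eq_min_abs h]

theorem gbm_union_ball_measure_general (xu xv r : ℝ)
    (hxu : xu ∈ Set.Icc (0 : ℝ) 1) (hxv : xv ∈ Set.Icc (0 : ℝ) 1)
    (hx : dL xu xv + 2 * r ≤ 1) :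
    volume {z : ℝ | z ∈ Set.Icc (0 : ℝ) 1 ∧ (dL z xu ≤ r ∨ dL z xv ≤ r)}
      = ENNReal.ofReal (min (2 * r + dL xu xv) (4 * r)) ∧
    (dL xu xv ≤ 2 * r →
      volume {z : ℝ | z ∈ Set.Icc (0 : ℝ) 1 ∧ (dL z xu ≤ r ∨ dL z xv ≤ r)}
        = ENNReal.ofReal (2 * r + dL xu xv)) ∧
    (2 * r < dL xu xv →
      volume {z : ℝ | z ∈ Set.Icc (0 : ℝ) 1 ∧ (dL z xu ≤ r ∨ dL z xv ≤ r)}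
        = ENNReal.ofReal (4 * r)) := by
  have hdL : ∀ z ∈ Icc (0 : ℝ) 1, ∀ c ∈ Icc (0 : ℝ) 1, dL z c = dist (z : UnitAddCircle) c :=
    fun z hz c hc =>
      dL_eq_dist (abs_sub_le_iff.2 ⟨by linarith [hz.2, hc.1], by linarith [hz.1, hc.2]⟩)
  have hset : {z : ℝ | z ∈ Icc (0 : ℝ) 1 ∧ (dL z xu ≤ r ∨ dL z xv ≤ r)}
      = Icc 0 (0 + 1) ∩
          (↑) ⁻¹' (closedBall (xu : UnitAddCircle) r ∪ closedBall (xv : UnitAddCircle) r) := by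
    ext z
    rw [zero_add]
    refine and_congr_right fun hz => ?_
    rw [hdL z hz xu hxu, hdL z hz xv hxv]
    rfl
  have hvol : volume {z : ℝ | z ∈ Icc (0 : ℝ) 1 ∧ (dL z xu ≤ r ∨ dL z xv ≤ r)}
      = ENNReal.ofReal (min (2 * r + dL xu xv) (4 * r)) := by
    rw [hset, AddCircle.volume_Icc_inter_preimage_coe 0
      (measurableSet_closedBall.union measurableSet_closedBall), hdL xu hxu xv hxv]
    exact AddCircle.volume_closedBall_union_closedBall _ _ (hdL xu hxu xv hxv ▸ hx)
  exact ⟨hvol, fun h => by rw [hvol, min_eq_left (by linarith)],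
    fun h => by rw [hvol, min_eq_right (by linarith)]⟩

/-- measure of the union of two circular balls of radius `r`
centered at `x_u` and `x_v` (complement of Motif 4). -/
theorem gbm_union_ball_measure (xu xv r : ℝ)
    (hxu : xu ∈ Set.Icc (0 : ℝ) 1) (hxv : xv ∈ Set.Icc (0 : ℝ) 1)
    (hr : r ∈ Set.Icc (0 : ℝ) (1 / 2))
    (hx : dL xu xv + 2 * r ≤ 1) :
    volume {z : ℝ | z ∈ Set.Icc (0 : ℝ) 1 ∧ (dL z xu ≤ r ∨ dL z xv ≤ r)}
      = ENNReal.ofReal (min (2 * r + dL xu xv) (4 * r)) ∧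
    (dL xu xv ≤ 2 * r →
      volume {z : ℝ | z ∈ Set.Icc (0 : ℝ) 1 ∧ (dL z xu ≤ r ∨ dL z xv ≤ r)}
        = ENNReal.ofReal (2 * r + dL xu xv)) ∧
    (2 * r < dL xu xv →
      volume {z : ℝ | z ∈ Set.Icc (0 : ℝ) 1 ∧ (dL z xu ≤ r ∨ dL z xv ≤ r)}
        = ENNReal.ofReal (4 * r)) :=
  gbm_union_ball_measure_general xu xv r hxu hxv hx
end

section
/- Fix x_u, x_v ∈ [0,1] with x = d_L(x_u, x_v), let 0 ≤ r_d ≤ r_s with r_s > 2r_d, x ≤ r_s and x + 2r_s ≤ 1, and let Z_1, …, Z_{m₁} and W_1, …, W_{m₂} be i.i.d. uniform on [0,1]. Then: (i) the count #{i ≤ m₁ : d_L(Z_i, x_u) > r_s and d_L(Z_i, x_v) > r_s} has the binomial distribution Bin(m₁, 1 − (x + 2r_s)); (ii) if x ≤ 2r_d, the count #{j ≤ m₂ : d_L(W_j, x_u) > r_d and d_L(W_j, x_v) > r_d} has distribution Bin(m₂, 1 − (x + 2r_d)), and if x > 2r_d it has distribution Bin(m₂, 1 − 4r_d). -/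
/-!
Reading `[0,1]` as the unit circle `ℝ/ℤ`, `dL` is the circle distance and `unif` is pushed forward
to Haar measure. By translation invariance, the probability of being farther than `r` from two
points at circle distance `d` is computed with the points at `0` and `d`: the good set in `(0,1]`
is `(d + r, 1 - r) ∪ (r, d - r)`, of measure `(1 - d - 2r)⁺ + (d - 2r)⁺`. Each count is then the
number of independent uniform points falling in a fixed set, hence binomial.
-/

open MeasureTheory

/-- The uniform (probability) measure on `[0,1]`. -/
noncomputable def unif : Measure ℝ := volume.restrict (Set.Icc (0 : ℝ) 1)

/-- The binomial probability `Bin(m,p)` of the value `k`. -/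
noncomputable def binomPMF (m : ℕ) (p : ℝ) (k : ℕ) : ENNReal :=
  ENNReal.ofReal ((m.choose k : ℝ) * p ^ k * (1 - p) ^ (m - k))

open Set

lemma UnitAddCircle.norm_coe_eq_min {x : ℝ} (hx : |x| ≤ 1) :
    ‖(x : UnitAddCircle)‖ = min |x| (1 - |x|) := by
  have norm_coe_of_le_half {y : ℝ} (hy : |y| ≤ 1 / 2) : ‖(y : UnitAddCircle)‖ = |y| :=
    (AddCircle.norm_coe_eq_abs_iff 1 one_ne_zero).2 (by simpa using hy)
  rcases le_or_gt |x| (1 / 2) with hx₂ | hx₂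
  · rw [min_eq_left (by linarith), norm_coe_of_le_half hx₂]
  · obtain ⟨y, hy, hxy⟩ : ∃ y : ℝ, |y| = 1 - |x| ∧ (y : UnitAddCircle) = x := by
      rcases abs_cases x with ⟨hx', -⟩ | ⟨hx', -⟩
      · refine ⟨x - 1, by rw [abs_of_nonpos (by linarith)]; linarith, ?_⟩
        rw [← AddCircle.coe_add_period 1 (x - 1), sub_add_cancel]
      · exact ⟨x + 1, by rw [abs_of_nonneg (by linarith)]; linarith, AddCircle.coe_add_period ..⟩
    rw [min_eq_right (by linarith), ← hxy, ← hy, norm_coe_of_le_half (by linarith)]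

lemma dL_eq_dist_coe {a b : ℝ} (h : |a - b| ≤ 1) : dL a b = dist (a : UnitAddCircle) b := by
  rw [dist_eq_norm, ← AddCircle.coe_sub, UnitAddCircle.norm_coe_eq_min h, dL]

lemma continuous_dL_left (c : ℝ) : Continuous fun z ↦ dL z c := by
  unfold dL; fun_prop

lemma measurePreserving_coe_unif : MeasurePreserving ((↑) : ℝ → UnitAddCircle) unif volume := by
  have h := AddCircle.measurePreserving_mk 1 0
  rwa [zero_add, Measure.restrict_congr_set Ioc_ae_eq_Icc] at h

instance : IsProbabilityMeasure unif :=
  ⟨by rw [unif, Measure.restrict_apply_univ, Real.volume_Icc, sub_zero, ENNReal.ofReal_one]⟩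

lemma UnitAddCircle.volume_setOf_lt_norm_and_lt_norm_sub_coe {r y : ℝ} (hr : 0 ≤ r)
    (hy : y ∈ Icc (0 : ℝ) 1) :
    volume {w : UnitAddCircle | r < ‖w‖ ∧ r < ‖w - y‖}
      = ENNReal.ofReal (1 - y - 2 * r) + ENNReal.ofReal (y - 2 * r) := by
  obtain ⟨hy₀, hy₁⟩ := hy
  have hmeas : MeasurableSet {w : UnitAddCircle | r < ‖w‖ ∧ r < ‖w - y‖} :=
    (isOpen_lt continuous_const continuous_norm).measurableSet.inter
      (isOpen_lt continuous_const (continuous_norm.comp (continuous_sub_right _))).measurableSet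
  have hpre : ((↑) : ℝ → UnitAddCircle) ⁻¹' {w | r < ‖w‖ ∧ r < ‖w - y‖} ∩ Ioc 0 1
      = Ioo (y + r) (1 - r) ∪ Ioo r (y - r) := by
    ext z
    simp only [mem_inter_iff, mem_preimage, mem_ofPred_eq, ← AddCircle.coe_sub, mem_union, mem_Ioo,
      mem_Ioc]
    by_cases hz : 0 < z ∧ z ≤ 1
    · rw [UnitAddCircle.norm_coe_eq_min (abs_le.2 ⟨by linarith, hz.2⟩),
        UnitAddCircle.norm_coe_eq_min (abs_le.2 ⟨by linarith, by linarith⟩), abs_of_pos hz.1]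
      grind
    · grind
  have hdisj : Disjoint (Ioo (y + r) (1 - r)) (Ioo r (y - r)) :=
    Set.disjoint_left.2 fun z h₁ h₂ ↦ by linarith [h₁.1, h₂.2]
  rw [AddCircle.add_projection_respects_measure 1 0 hmeas, zero_add, hpre,
    measure_union hdisj measurableSet_Ioo, Real.volume_Ioo, Real.volume_Ioo]
  ring_nf

lemma UnitAddCircle.volume_setOf_lt_dist_and_lt_dist {r : ℝ} (hr : 0 ≤ r) (p q : UnitAddCircle) :
    volume {w | r < dist w p ∧ r < dist w q}
      = ENNReal.ofReal (1 - dist p q - 2 * r) + ENNReal.ofReal (dist p q - 2 * r) := by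
  obtain ⟨y, hy, hyqp⟩ : ∃ y ∈ Ico (0 : ℝ) 1, (y : UnitAddCircle) = q - p := by
    refine ⟨_, ?_, AddCircle.coe_equivIco (a := 0)⟩
    simpa using (AddCircle.equivIco 1 0 (q - p)).2
  have htrans : (· + p) ⁻¹' {w | r < dist w p ∧ r < dist w q}
      = {w : UnitAddCircle | r < ‖w‖ ∧ r < ‖w - y‖} := by
    ext w
    simp only [mem_preimage, mem_ofPred_eq, dist_eq_norm, hyqp, add_sub_cancel_right,
      sub_sub_eq_add_sub]
  have hdist : dist p q = min y (1 - y) := by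
    rw [dist_comm, dist_eq_norm, ← hyqp, UnitAddCircle.norm_coe_eq_min (by grind [abs_of_nonneg]),
      abs_of_nonneg hy.1]
  rw [← measure_preimage_add_right _ p, htrans,
    volume_setOf_lt_norm_and_lt_norm_sub_coe hr (Ico_subset_Icc_self hy), hdist]
  rcases le_total y (1 - y) with h | h
  · rw [min_eq_left h]
  · rw [min_eq_right h, add_comm]; ring_nf

lemma unif_setOf_lt_dL_and_lt_dL {a b r : ℝ} (ha : a ∈ Icc (0 : ℝ) 1) (hb : b ∈ Icc (0 : ℝ) 1)
    (hr : 0 ≤ r) :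
    unif {z | r < dL z a ∧ r < dL z b}
      = ENNReal.ofReal (1 - dL a b - 2 * r) + ENNReal.ofReal (dL a b - 2 * r) := by
  have abs_sub_le_one {x y : ℝ} (hx : x ∈ Icc (0 : ℝ) 1) (hy : y ∈ Icc (0 : ℝ) 1) : |x - y| ≤ 1 :=
    abs_sub_le_iff.2 ⟨by linarith [hx.2, hy.1], by linarith [hx.1, hy.2]⟩
  have hset : {z | r < dL z a ∧ r < dL z b} ∩ Icc 0 1
      = (↑) ⁻¹' {w : UnitAddCircle | r < dist w a ∧ r < dist w b} ∩ Icc 0 1 := by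
    ext z
    simp only [mem_inter_iff, mem_preimage, mem_ofPred_eq, and_congr_left_iff]
    intro hz
    rw [dL_eq_dist_coe (abs_sub_le_one hz ha), dL_eq_dist_coe (abs_sub_le_one hz hb)]
  have hmeas : MeasurableSet {w : UnitAddCircle | r < dist w a ∧ r < dist w b} :=
    (isOpen_lt continuous_const (continuous_id.dist continuous_const)).measurableSet.inter
      (isOpen_lt continuous_const (continuous_id.dist continuous_const)).measurableSet
  rw [unif, Measure.restrict_apply' measurableSet_Icc, hset,
    ← Measure.restrict_apply' measurableSet_Icc, ← unif,
    measurePreserving_coe_unif.measure_preimage hmeas.nullMeasurableSet,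
    UnitAddCircle.volume_setOf_lt_dist_and_lt_dist hr, ← dL_eq_dist_coe (abs_sub_le_one ha hb)]

section BinomialCount

open Finset

variable {α ι : Type*} [Fintype ι] {S : Set α} [DecidablePred (· ∈ S)]

lemma setOf_filter_mem_eq_pi [DecidableEq ι] (T : Finset ι) :
    {ω : ι → α | univ.filter (ω · ∈ S) = T} = Set.univ.pi fun i ↦ if i ∈ T then S else Sᶜ := by
  ext ω
  simp only [mem_ofPred_eq, Set.mem_pi, Set.mem_univ, true_implies, Finset.ext_iff, mem_filter,
    Finset.mem_univ, true_and]
  refine forall_congr' fun i ↦ ?_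
  split_ifs with hi <;> simp [hi]

variable [MeasurableSpace α] (μ : Measure α) [SigmaFinite μ]

lemma pi_setOf_filter_mem_eq [DecidableEq ι] (T : Finset ι) :
    Measure.pi (fun _ : ι ↦ μ) {ω | univ.filter (ω · ∈ S) = T}
      = μ S ^ #T * μ Sᶜ ^ (Fintype.card ι - #T) := by
  rw [setOf_filter_mem_eq_pi, Measure.pi_pi, prod_apply_ite, prod_const, prod_const,
    filter_mem_eq_inter, Finset.univ_inter, filter_notMem_eq_sdiff, card_univ_sdiff]

lemma pi_setOf_card_filter_mem_eq (hS : MeasurableSet S) (k : ℕ) :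
    Measure.pi (fun _ : ι ↦ μ) {ω | #(univ.filter (ω · ∈ S)) = k}
      = (Fintype.card ι).choose k * μ S ^ k * μ Sᶜ ^ (Fintype.card ι - k) := by
  classical
  have hunion : {ω : ι → α | #(univ.filter (ω · ∈ S)) = k}
      = ⋃ T ∈ powersetCard k univ, {ω | univ.filter (ω · ∈ S) = T} := by
    ext ω
    simp
  have hdisj : Set.PairwiseDisjoint ↑(powersetCard k (univ : Finset ι))
      fun T ↦ {ω : ι → α | univ.filter (ω · ∈ S) = T} :=
    fun T _ T' _ hne ↦ Set.disjoint_left.2 fun ω hT hT' ↦ hne (hT.symm.trans hT')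
  have hmeas (T : Finset ι) : MeasurableSet {ω : ι → α | univ.filter (ω · ∈ S) = T} := by
    rw [setOf_filter_mem_eq_pi]
    exact .univ_pi fun i ↦ by split_ifs; exacts [hS, hS.compl]
  rw [hunion, measure_biUnion_finset hdisj fun T _ ↦ hmeas T,
    sum_congr rfl fun T hT ↦ (mem_powersetCard_univ.1 hT) ▸ pi_setOf_filter_mem_eq μ T,
    sum_const, card_powersetCard, card_univ, nsmul_eq_mul, mul_assoc]

end BinomialCount

lemma pi_setOf_card_filter_mem_eq_binomPMF {α : Type*} [MeasurableSpace α] (μ : Measure α)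
    [IsProbabilityMeasure μ] {S : Set α} [DecidablePred (· ∈ S)] (hS : MeasurableSet S) {p : ℝ}
    (hp : 0 ≤ p) (hμS : μ S = ENNReal.ofReal p) (m k : ℕ) :
    Measure.pi (fun _ : Fin m ↦ μ) {ω | (Finset.univ.filter (ω · ∈ S)).card = k}
      = binomPMF m p k := by
  have hp₁ : p ≤ 1 := ENNReal.ofReal_le_one.1 (hμS ▸ prob_le_one)
  have hμSc : μ Sᶜ = ENNReal.ofReal (1 - p) := by
    rw [prob_compl_eq_one_sub hS, hμS, ENNReal.ofReal_sub 1 hp, ENNReal.ofReal_one]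
  rw [pi_setOf_card_filter_mem_eq μ hS, Fintype.card_fin, hμS, hμSc, binomPMF,
    ENNReal.ofReal_mul (by positivity), ENNReal.ofReal_mul (by positivity), ENNReal.ofReal_pow hp,
    ENNReal.ofReal_pow (by linarith), ENNReal.ofReal_natCast]

lemma Measure.prod_preimage_fst {α β : Type*} [MeasurableSpace α] [MeasurableSpace β]
    (μ : Measure α) (ν : Measure β) [IsProbabilityMeasure ν] (s : Set α) :
    μ.prod ν (Prod.fst ⁻¹' s) = μ s := by
  rw [← Set.prod_univ, Measure.prod_prod, measure_univ, mul_one]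

lemma Measure.prod_preimage_snd {α β : Type*} [MeasurableSpace α] [MeasurableSpace β]
    (μ : Measure α) [IsProbabilityMeasure μ] (ν : Measure β) [SFinite ν] (s : Set β) :
    μ.prod ν (Prod.snd ⁻¹' s) = ν s := by
  rw [← Set.univ_prod, Measure.prod_prod, measure_univ, one_mul]

theorem gbm_motif4_count_same_general (xu xv rs rd : ℝ) (m₁ m₂ : ℕ)
    (hxu : xu ∈ Set.Icc (0 : ℝ) 1) (hxv : xv ∈ Set.Icc (0 : ℝ) 1)
    (hrd : 0 ≤ rd) (hrs2 : 2 * rd < rs)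
    (hx : dL xu xv ≤ rs) (hx1 : dL xu xv + 2 * rs ≤ 1) :
    (∀ k : ℕ,
      ((Measure.pi fun _ : Fin m₁ => unif).prod (Measure.pi fun _ : Fin m₂ => unif))
        {ω | (Finset.univ.filter fun i : Fin m₁ =>
              rs < dL (ω.1 i) xu ∧ rs < dL (ω.1 i) xv).card = k}
        = binomPMF m₁ (1 - (dL xu xv + 2 * rs)) k) ∧
    (dL xu xv ≤ 2 * rd → ∀ k : ℕ,
      ((Measure.pi fun _ : Fin m₁ => unif).prod (Measure.pi fun _ : Fin m₂ => unif))
        {ω | (Finset.univ.filter fun j : Fin m₂ =>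
              rd < dL (ω.2 j) xu ∧ rd < dL (ω.2 j) xv).card = k}
        = binomPMF m₂ (1 - (dL xu xv + 2 * rd)) k) ∧
    (2 * rd < dL xu xv → ∀ k : ℕ,
      ((Measure.pi fun _ : Fin m₁ => unif).prod (Measure.pi fun _ : Fin m₂ => unif))
        {ω | (Finset.univ.filter fun j : Fin m₂ =>
              rd < dL (ω.2 j) xu ∧ rd < dL (ω.2 j) xv).card = k}
        = binomPMF m₂ (1 - 4 * rd) k) := by
  have hrs : 0 ≤ rs := by linarith
  have hmeas (r : ℝ) : MeasurableSet {z | r < dL z xu ∧ r < dL z xv} :=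
    (isOpen_lt continuous_const (continuous_dL_left xu)).measurableSet.inter
      (isOpen_lt continuous_const (continuous_dL_left xv)).measurableSet
  have hunif {r : ℝ} (hr : 0 ≤ r) := unif_setOf_lt_dL_and_lt_dL hxu hxv hr
  refine ⟨fun k ↦ ?_, fun hnear k ↦ ?_, fun hfar k ↦ ?_⟩
  · refine (Measure.prod_preimage_fst _ _ _).trans
      (pi_setOf_card_filter_mem_eq_binomPMF unif (hmeas rs) (by linarith) ?_ m₁ k)
    rw [hunif hrs, ENNReal.ofReal_of_nonpos (by linarith : dL xu xv - 2 * rs ≤ 0), add_zero,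
      sub_sub]
  · refine (Measure.prod_preimage_snd _ _ _).trans
      (pi_setOf_card_filter_mem_eq_binomPMF unif (hmeas rd) (by linarith) ?_ m₂ k)
    rw [hunif hrd, ENNReal.ofReal_of_nonpos (by linarith : dL xu xv - 2 * rd ≤ 0), add_zero,
      sub_sub]
  · refine (Measure.prod_preimage_snd _ _ _).trans
      (pi_setOf_card_filter_mem_eq_binomPMF unif (hmeas rd) (by linarith) ?_ m₂ k)
    rw [hunif hrd, ← ENNReal.ofReal_add (by linarith) (by linarith)]
    ring_nf

/-- Lemma 6 of the paper: for two same-cluster vertices at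
circular distance `x ≤ r_s` with `r_s > 2r_d` and `x + 2r_s ≤ 1`, the Motif-4
count among `m₁` same-cluster points is `Bin(m₁, 1 − (x + 2r_s))`-distributed,
and among `m₂` other-cluster points it is `Bin(m₂, 1 − (x + 2r_d))`-distributed
if `x ≤ 2r_d` and `Bin(m₂, 1 − 4r_d)`-distributed if `x > 2r_d`. -/
theorem gbm_motif4_count_same (xu xv rs rd : ℝ) (m₁ m₂ : ℕ)
    (hxu : xu ∈ Set.Icc (0 : ℝ) 1) (hxv : xv ∈ Set.Icc (0 : ℝ) 1)
    (hrd : 0 ≤ rd) (hrsd : rd ≤ rs) (hrs2 : 2 * rd < rs)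
    (hx : dL xu xv ≤ rs) (hx1 : dL xu xv + 2 * rs ≤ 1) :
    (∀ k : ℕ,
      ((Measure.pi fun _ : Fin m₁ => unif).prod (Measure.pi fun _ : Fin m₂ => unif))
        {ω | (Finset.univ.filter fun i : Fin m₁ =>
              rs < dL (ω.1 i) xu ∧ rs < dL (ω.1 i) xv).card = k}
        = binomPMF m₁ (1 - (dL xu xv + 2 * rs)) k) ∧
    (dL xu xv ≤ 2 * rd → ∀ k : ℕ,
      ((Measure.pi fun _ : Fin m₁ => unif).prod (Measure.pi fun _ : Fin m₂ => unif))
        {ω | (Finset.univ.filter fun j : Fin m₂ =>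
              rd < dL (ω.2 j) xu ∧ rd < dL (ω.2 j) xv).card = k}
        = binomPMF m₂ (1 - (dL xu xv + 2 * rd)) k) ∧
    (2 * rd < dL xu xv → ∀ k : ℕ,
      ((Measure.pi fun _ : Fin m₁ => unif).prod (Measure.pi fun _ : Fin m₂ => unif))
        {ω | (Finset.univ.filter fun j : Fin m₂ =>
              rd < dL (ω.2 j) xu ∧ rd < dL (ω.2 j) xv).card = k}
        = binomPMF m₂ (1 - 4 * rd) k) :=
  gbm_motif4_count_same_general xu xv rs rd m₁ m₂ hxu hxv hrd hrs2 hx hx1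
end
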